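/- Let τ > 0 and let θ̂ be an even, rapidly decaying Fourier-side solution of the SQG equation with θ̂_k(0) = (p_τ)_k for all k, and suppose θ̂_k(t) = 0 for all t ≥ 0 whenever k₂ is odd. Then for all t ≥ 0: (i) Σ_{k∈ℤ², k≠0} θ̂_k(t)² (1 − 1/|k|) = (3 − 2/√5) τ², and (ii) Σ_{k∈ℤ², k∉{e,−e}} θ̂_k(t)² ≤ 10 τ². -/

import Mathlib

open scoped BigOperators

noncomputable section

/-- Euclidean norm of a lattice point `k ∈ ℤ²`. -/
def znorm (k : ℤ × ℤ) : ℝ := Real.sqrt ((k.1 : ℝ) ^ 2 + (k.2 : ℝ) ^ 2)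

/-- Wedge product `l ∧ m = l₁ m₂ − l₂ m₁`. -/
def wedge (l m : ℤ × ℤ) : ℝ := ((l.1 * m.2 - l.2 * m.1 : ℤ) : ℝ)

/-- The summand of the Fourier-side SQG nonlinearity at frequency `k`,
parametrized by `l` (with `m = k - l`); it is set to `0` unless `l ≠ 0` and `m ≠ 0`. -/
def sqgSummand (a : ℤ × ℤ → ℝ) (k l : ℤ × ℤ) : ℝ :=
  if l ≠ 0 ∧ k - l ≠ 0 then
    wedge l (k - l) * (1 / znorm l - 1 / znorm (k - l)) * a l * a (k - l)
  else 0

/-- An even, rapidly decaying Fourier-side solution of the conservative SQG equation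
on `[0,∞)` (modelled as a family `θ : ℝ → ℤ² → ℝ` whose defining properties are
imposed for `t ≥ 0`). -/
structure SQGSol where
  θ : ℝ → ℤ × ℤ → ℝ
  zero_mode : ∀ t : ℝ, 0 ≤ t → θ t 0 = 0
  /-- the nonlinearity is an absolutely convergent sum -/
  rhs_summable : ∀ t : ℝ, 0 ≤ t → ∀ k : ℤ × ℤ,
    Summable fun l : ℤ × ℤ => |sqgSummand (θ t) k l|
  /-- each `t ↦ θ̂_k(t)` is differentiable on `[0,∞)` and satisfies the SQG ODE -/
  ode : ∀ (k : ℤ × ℤ) (t : ℝ), 0 ≤ t →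
    HasDerivWithinAt (fun s => θ s k)
      ((1 / 2) * ∑' l : ℤ × ℤ, sqgSummand (θ t) k l) (Set.Ici 0) t
  /-- rapid decay: for every `T > 0` and `N ∈ ℕ`,
  `sup_{0 ≤ t ≤ T} sup_k (1+|k|)^N |θ̂_k(t)| < ∞` -/
  decay : ∀ T : ℝ, 0 < T → ∀ N : ℕ, ∃ M : ℝ,
    ∀ t ∈ Set.Icc (0 : ℝ) T, ∀ k : ℤ × ℤ, (1 + znorm k) ^ N * |θ t k| ≤ M

/-- The solution is even: `θ̂_{-k}(t) = θ̂_k(t)`. -/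
def SQGSol.IsEven (Θ : SQGSol) : Prop :=
  ∀ t : ℝ, 0 ≤ t → ∀ k : ℤ × ℤ, Θ.θ t (-k) = Θ.θ t k

/-- The initial datum `p_τ`: value `1` at `±e = ±(1,0)`, value `τ` at
`±g = ±(0,2)` and `±(g+e) = ±(1,2)`, and `0` elsewhere. -/
def pdat (τ : ℝ) : ℤ × ℤ → ℝ := fun k =>
  if k = (1, 0) ∨ k = (-1, 0) then 1
  else if k = (0, 2) ∨ k = (0, -2) ∨ k = (1, 2) ∨ k = (-1, -2) then τ
  else 0

/-!
The functional `H(θ) = Σ_{k ≠ 0} θ_k² (1 - 1/|k|) = ‖θ‖²_{L²} - ‖θ‖²_{Ḣ^{-1/2}}` is conserved.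
By the ODE, `dH/dt = Σ_k c_k N_k` with `c_k = θ_k (1 - 1/|k|)` and
`N_k = Σ_{l + m = k} (l ∧ m)(1/|l| - 1/|m|) θ_l θ_m`; regrouping this absolutely convergent double
sum by triads `l + m + n = 0`, the three contributions of each triad cancel when `θ` is even.
Rapid decay justifies differentiating `H` termwise.

Hence `H(θ(t)) = H(p_τ) = (3 - 2/√5) τ²`, the modes `±e` contributing nothing because
`|e| = 1`. Every other mode with even `k₂` has `|k| ≥ 2`, so `θ_k² ≤ 2 θ_k² (1 - 1/|k|)`, and the
sum in (ii) is at most `2 H ≤ 10 τ²`.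
-/

open Set

lemma tsum_eq_zero_of_add_add_eq_zero {α : Type*} (f : α → ℝ) (σ : α ≃ α)
    (h : ∀ p, f p + f (σ p) + f (σ (σ p)) = 0) : ∑' p, f p = 0 := by
  by_cases hf : Summable f
  · have hf₁ : Summable fun p => f (σ p) := σ.summable_iff.mpr hf
    have hf₂ : Summable fun p => f (σ (σ p)) := (σ.trans σ).summable_iff.mpr hf
    have hsum : ∑' p, (f p + f (σ p) + f (σ (σ p))) = 0 := by simp only [h, tsum_zero]
    rw [(hf.add hf₁).tsum_add hf₂, hf.tsum_add hf₁, σ.tsum_eq fun p => f (σ p),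
      σ.tsum_eq f] at hsum
    linarith
  · exact tsum_eq_zero_of_not_summable hf

lemma znorm_nonneg (k : ℤ × ℤ) : 0 ≤ znorm k := Real.sqrt_nonneg _

lemma znorm_neg (k : ℤ × ℤ) : znorm (-k) = znorm k := by
  simp [znorm]

lemma le_znorm_iff {r : ℝ} (hr : 0 ≤ r) (k : ℤ × ℤ) :
    r ≤ znorm k ↔ r ^ 2 ≤ (k.1 : ℝ) ^ 2 + (k.2 : ℝ) ^ 2 :=
  Real.le_sqrt hr (by positivity)

lemma one_le_znorm {k : ℤ × ℤ} (hk : k ≠ 0) : 1 ≤ znorm k := by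
  obtain ⟨a, b⟩ := k
  have hab : a ≠ 0 ∨ b ≠ 0 := by
    by_contra! h
    exact hk (Prod.ext h.1 h.2)
  rw [le_znorm_iff zero_le_one]
  have : (1 : ℤ) ≤ a ^ 2 + b ^ 2 := by
    rcases hab with h | h <;>
      nlinarith [Int.one_le_abs h, sq_abs a, sq_abs b, sq_nonneg a, sq_nonneg b]
  exact_mod_cast this

lemma two_le_znorm {k : ℤ × ℤ} (hk : k ≠ 0) (he : k ≠ (1, 0)) (he' : k ≠ (-1, 0))
    (heven : Even k.2) : 2 ≤ znorm k := by
  obtain ⟨a, b⟩ := k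
  rw [le_znorm_iff zero_le_two]
  have : (4 : ℤ) ≤ a ^ 2 + b ^ 2 := by
    obtain ⟨c, hc⟩ := heven
    simp only [ne_eq, Prod.ext_iff, Prod.fst_zero, Prod.snd_zero] at hk he he'
    rcases eq_or_ne b 0 with rfl | hb
    · have : 2 ≤ |a| := by
        rcases abs_cases a with h | h <;> omega
      nlinarith [sq_abs a]
    · have : 2 ≤ |b| := by
        rcases abs_cases b with h | h <;> omega
      nlinarith [sq_abs b, sq_nonneg a]
  exact_mod_cast this

lemma one_sub_inv_znorm_nonneg {k : ℤ × ℤ} (hk : k ≠ 0) : 0 ≤ 1 - 1 / znorm k := by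
  have := one_le_znorm hk
  rw [sub_nonneg, div_le_one (by linarith)]
  exact this

lemma abs_fst_le_znorm (k : ℤ × ℤ) : |(k.1 : ℝ)| ≤ znorm k :=
  Real.abs_le_sqrt (by nlinarith [sq_nonneg (k.2 : ℝ)])

lemma abs_snd_le_znorm (k : ℤ × ℤ) : |(k.2 : ℝ)| ≤ znorm k :=
  Real.abs_le_sqrt (by nlinarith [sq_nonneg (k.1 : ℝ)])

lemma abs_wedge_le (l m : ℤ × ℤ) : |wedge l m| ≤ znorm l * znorm m := by
  rw [znorm, znorm, ← Real.sqrt_mul (by positivity)]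
  refine Real.abs_le_sqrt ?_
  simp only [wedge]
  push_cast
  nlinarith [sq_nonneg ((l.1 : ℝ) * m.1 + l.2 * m.2)]

lemma wedge_neg_add_left (l m : ℤ × ℤ) : wedge m (-(l + m)) = wedge l m := by
  simp only [wedge, Prod.fst_neg, Prod.snd_neg, Prod.fst_add, Prod.snd_add]
  push_cast
  ring

lemma wedge_neg_add_right (l m : ℤ × ℤ) : wedge (-(l + m)) l = wedge l m := by
  simp only [wedge, Prod.fst_neg, Prod.snd_neg, Prod.fst_add, Prod.snd_add]
  push_cast
  ring

def decayWeight (k : ℤ × ℤ) : ℝ := ((1 + znorm k) ^ 4)⁻¹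

lemma decayWeight_pos (k : ℤ × ℤ) : 0 < decayWeight k := by
  have := znorm_nonneg k
  unfold decayWeight
  positivity

lemma decayWeight_le_one (k : ℤ × ℤ) : decayWeight k ≤ 1 :=
  inv_le_one_of_one_le₀ (one_le_pow₀ (by linarith [znorm_nonneg k]))

lemma summable_inv_one_add_abs_sq : Summable fun n : ℤ => ((1 + |(n : ℝ)|) ^ 2)⁻¹ := by
  have hnat : Summable fun n : ℕ => ((1 + (n : ℝ)) ^ 2)⁻¹ := by
    refine ((summable_nat_add_iff 1).mpr
      (Real.summable_one_div_nat_pow.mpr one_lt_two)).congr fun n => ?_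
    push_cast
    rw [one_div, add_comm]
  exact .of_nat_of_neg (hnat.congr fun n => by simp) (hnat.congr fun n => by simp)

lemma summable_decayWeight : Summable decayWeight := by
  have h := summable_inv_one_add_abs_sq
  refine (h.mul_of_nonneg h (fun _ => by positivity) (fun _ => by positivity)).of_nonneg_of_le
    (fun k => (decayWeight_pos k).le) fun k => ?_
  have h1 := abs_fst_le_znorm k
  have h2 := abs_snd_le_znorm k
  have hprod : (1 + |(k.1 : ℝ)|) * (1 + |(k.2 : ℝ)|) ≤ (1 + znorm k) ^ 2 := by
    nlinarith [abs_nonneg (k.1 : ℝ), abs_nonneg (k.2 : ℝ)]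
  rw [decayWeight, ← mul_inv, ← mul_pow, show 4 = 2 * 2 from rfl, pow_mul]
  gcongr

section Hamiltonian

variable (a : ℤ × ℤ → ℝ)

def sqgNonlinearity (k : ℤ × ℤ) : ℝ := ∑' l, sqgSummand a k l

def hamiltonianDensity (k : ℤ × ℤ) : ℝ := if k ≠ 0 then a k ^ 2 * (1 - 1 / znorm k) else 0

def hamiltonian : ℝ := ∑' k, hamiltonianDensity a k

/-- Half the partial derivative of `hamiltonianDensity a k` in `a k`. -/
def hamiltonianGrad (k : ℤ × ℤ) : ℝ := if k ≠ 0 then a k * (1 - 1 / znorm k) else 0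

lemma hamiltonianDensity_eq_mul (k : ℤ × ℤ) :
    hamiltonianDensity a k = a k * hamiltonianGrad a k := by
  unfold hamiltonianDensity hamiltonianGrad
  split_ifs <;> ring

lemma hamiltonianDensity_nonneg (k : ℤ × ℤ) : 0 ≤ hamiltonianDensity a k := by
  unfold hamiltonianDensity
  split_ifs with hk
  · exact mul_nonneg (sq_nonneg _) (one_sub_inv_znorm_nonneg hk)
  · exact le_rfl

lemma abs_hamiltonianGrad_le (k : ℤ × ℤ) : |hamiltonianGrad a k| ≤ |a k| := by
  unfold hamiltonianGrad
  split_ifs with hk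
  · have : 0 ≤ 1 / znorm k := by
      have := znorm_nonneg k
      positivity
    rw [abs_mul, abs_of_nonneg (one_sub_inv_znorm_nonneg hk)]
    exact mul_le_of_le_one_right (abs_nonneg _) (by linarith)
  · simp

lemma abs_sqgSummand_le (k l : ℤ × ℤ) :
    |sqgSummand a k l| ≤ (1 + znorm l) * |a l| * ((1 + znorm (k - l)) * |a (k - l)|) := by
  unfold sqgSummand
  split_ifs with h
  · have hl := one_le_znorm h.1
    have hm := one_le_znorm h.2
    have hw : |wedge l (k - l)| * |1 / znorm l - 1 / znorm (k - l)|
        ≤ (1 + znorm l) * (1 + znorm (k - l)) :=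
      calc |wedge l (k - l)| * |1 / znorm l - 1 / znorm (k - l)|
          ≤ znorm l * znorm (k - l) * (1 / znorm l + 1 / znorm (k - l)) := by
            gcongr
            · exact abs_wedge_le _ _
            · exact (abs_sub _ _).trans (by rw [abs_of_pos (by positivity),
                abs_of_pos (by positivity)])
        _ = znorm (k - l) + znorm l := by field_simp
        _ ≤ (1 + znorm l) * (1 + znorm (k - l)) := by nlinarith
    rw [abs_mul, abs_mul, abs_mul]
    calc |wedge l (k - l)| * |1 / znorm l - 1 / znorm (k - l)| * |a l| * |a (k - l)|
        ≤ (1 + znorm l) * (1 + znorm (k - l)) * |a l| * |a (k - l)| := by gcongr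
      _ = _ := by ring
  · rw [abs_zero]
    have := znorm_nonneg l
    have := znorm_nonneg (k - l)
    positivity

variable {a}

lemma hamiltonianGrad_mul_sqgSummand_triad (ha : ∀ k, a (-k) = a k) (l m : ℤ × ℤ) :
    hamiltonianGrad a (l + m) * sqgSummand a (l + m) l
      + hamiltonianGrad a (-l) * sqgSummand a (-l) m
      + hamiltonianGrad a (-m) * sqgSummand a (-m) (-(l + m)) = 0 := by
  rcases eq_or_ne l 0 with rfl | hl
  · simp [sqgSummand, hamiltonianGrad]
  rcases eq_or_ne m 0 with rfl | hm
  · simp [sqgSummand, hamiltonianGrad]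
  rcases eq_or_ne (l + m) 0 with hn | hn
  · simp [sqgSummand, hamiltonianGrad, eq_neg_of_add_eq_zero_right hn]
  have e1 : l + m - l = m := by abel
  have e2 : -l - m = -(l + m) := by abel
  have e3 : -m - -(l + m) = l := by abel
  simp only [hamiltonianGrad, sqgSummand, e1, e2, e3, ne_eq, neg_eq_zero, ha, znorm_neg,
    wedge_neg_add_left, wedge_neg_add_right, hl, hm, hn, not_false_eq_true, and_self, if_true]
  ring

end Hamiltonian

def triadEquiv : (ℤ × ℤ) × (ℤ × ℤ) ≃ (ℤ × ℤ) × (ℤ × ℤ) where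
  toFun p := (p.1 + p.2, p.1)
  invFun q := (q.2, q.1 - q.2)
  left_inv p := by simp
  right_inv q := by simp

/-- The rotation `(l, m, n) ↦ (m, n, l)` of a triad `l + m + n = 0`, encoded by `(l, m)`. -/
def triadRotate : (ℤ × ℤ) × (ℤ × ℤ) ≃ (ℤ × ℤ) × (ℤ × ℤ) where
  toFun p := (p.2, -(p.1 + p.2))
  invFun q := (-(q.1 + q.2), q.1)
  left_inv p := by simp
  right_inv q := by simp

lemma tsum_hamiltonianGrad_mul_sqgNonlinearity_eq_zero {a : ℤ × ℤ → ℝ}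
    (ha : ∀ k, a (-k) = a k)
    (hG : Summable fun p : (ℤ × ℤ) × (ℤ × ℤ) => hamiltonianGrad a p.1 * sqgSummand a p.1 p.2) :
    ∑' k, hamiltonianGrad a k * sqgNonlinearity a k = 0 := by
  set G : (ℤ × ℤ) × (ℤ × ℤ) → ℝ := fun p => hamiltonianGrad a p.1 * sqgSummand a p.1 p.2
  calc ∑' k, hamiltonianGrad a k * sqgNonlinearity a k = ∑' k, ∑' l, G (k, l) :=
        tsum_congr fun k => tsum_mul_left.symm
    _ = ∑' p, G p := hG.tsum_prod.symm
    _ = ∑' p, G (triadEquiv p) := (triadEquiv.tsum_eq G).symm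
    _ = 0 := tsum_eq_zero_of_add_add_eq_zero _ triadRotate fun p => by
        have e1 : p.2 + -(p.1 + p.2) = -p.1 := by abel
        have e2 : -(p.1 + p.2) + -(p.2 + -(p.1 + p.2)) = -p.2 := by abel
        simpa [G, triadEquiv, triadRotate, e1, e2] using
          hamiltonianGrad_mul_sqgSummand_triad ha p.1 p.2

/-- Decay of order five: one power of `1 + |k|` absorbs the growth of `sqgSummand`, the other
four make `decayWeight` summable on `ℤ²`. -/
def DecayBound (M : ℝ) (a : ℤ × ℤ → ℝ) : Prop :=
  ∀ k, (1 + znorm k) * |a k| ≤ M * decayWeight k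

namespace DecayBound

variable {M : ℝ} {a : ℤ × ℤ → ℝ}

lemma nonneg (hM : DecayBound M a) : 0 ≤ M :=
  nonneg_of_mul_nonneg_left
    ((mul_nonneg (by linarith [znorm_nonneg 0]) (abs_nonneg _)).trans (hM 0)) (decayWeight_pos 0)

lemma abs_le (hM : DecayBound M a) (k : ℤ × ℤ) : |a k| ≤ M * decayWeight k :=
  (le_mul_of_one_le_left (abs_nonneg _) (by linarith [znorm_nonneg k])).trans (hM k)

lemma abs_sqgSummand_le (hM : DecayBound M a) (k l : ℤ × ℤ) :
    |sqgSummand a k l| ≤ M ^ 2 * decayWeight l := by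
  have hl := hM l
  have hm : (1 + znorm (k - l)) * |a (k - l)| ≤ M :=
    (hM (k - l)).trans (mul_le_of_le_one_right hM.nonneg (decayWeight_le_one _))
  have := znorm_nonneg (k - l)
  have := mul_nonneg hM.nonneg (decayWeight_pos l).le
  calc |sqgSummand a k l|
      ≤ (1 + znorm l) * |a l| * ((1 + znorm (k - l)) * |a (k - l)|) :=
        _root_.abs_sqgSummand_le a k l
    _ ≤ M * decayWeight l * M := by gcongr
    _ = M ^ 2 * decayWeight l := by ring

lemma abs_sqgNonlinearity_le (hM : DecayBound M a) (k : ℤ × ℤ) :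
    |sqgNonlinearity a k| ≤ M ^ 2 * ∑' l, decayWeight l :=
  tsum_of_norm_bounded (f := sqgSummand a k) (summable_decayWeight.hasSum.mul_left _)
    (hM.abs_sqgSummand_le k)

lemma abs_hamiltonianDensity_le (hM : DecayBound M a) (k : ℤ × ℤ) :
    |hamiltonianDensity a k| ≤ M ^ 2 * decayWeight k := by
  have h := hM.abs_le k
  have hw := decayWeight_le_one k
  rw [hamiltonianDensity_eq_mul, abs_mul]
  calc |a k| * |hamiltonianGrad a k| ≤ (M * decayWeight k) * (M * decayWeight k) :=
        mul_le_mul h ((abs_hamiltonianGrad_le a k).trans h) (abs_nonneg _)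
          ((abs_nonneg _).trans h)
    _ ≤ M ^ 2 * decayWeight k := by
        have := hM.nonneg
        have := decayWeight_pos k
        nlinarith [mul_nonneg (sq_nonneg M) this.le]

lemma summable_hamiltonianDensity (hM : DecayBound M a) : Summable (hamiltonianDensity a) :=
  (summable_decayWeight.mul_left _).of_norm_bounded hM.abs_hamiltonianDensity_le

lemma summable_hamiltonianGrad_mul_sqgSummand (hM : DecayBound M a) :
    Summable fun p : (ℤ × ℤ) × (ℤ × ℤ) => hamiltonianGrad a p.1 * sqgSummand a p.1 p.2 := by
  have hw := fun k => (decayWeight_pos k).le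
  refine ((summable_decayWeight.mul_of_nonneg summable_decayWeight hw hw).mul_left
    (M * M ^ 2)).of_norm_bounded fun p => ?_
  have h := (abs_hamiltonianGrad_le a p.1).trans (hM.abs_le p.1)
  rw [Real.norm_eq_abs, abs_mul, mul_mul_mul_comm]
  exact mul_le_mul h (hM.abs_sqgSummand_le p.1 p.2) (abs_nonneg _) ((abs_nonneg _).trans h)

lemma abs_hamiltonianGrad_mul_sqgNonlinearity_le (hM : DecayBound M a) (k : ℤ × ℤ) :
    |hamiltonianGrad a k * sqgNonlinearity a k|
      ≤ M ^ 3 * (∑' l, decayWeight l) * decayWeight k := by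
  have h := (abs_hamiltonianGrad_le a k).trans (hM.abs_le k)
  rw [abs_mul]
  calc |hamiltonianGrad a k| * |sqgNonlinearity a k|
      ≤ M * decayWeight k * (M ^ 2 * ∑' l, decayWeight l) :=
        mul_le_mul h (hM.abs_sqgNonlinearity_le k) (abs_nonneg _) ((abs_nonneg _).trans h)
    _ = M ^ 3 * (∑' l, decayWeight l) * decayWeight k := by ring

end DecayBound

namespace SQGSol

variable (Θ : SQGSol)

lemma exists_decayBound {T : ℝ} (hT : 0 < T) : ∃ M, ∀ s ∈ Icc 0 T, DecayBound M (Θ.θ s) := by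
  obtain ⟨M, hM⟩ := Θ.decay T hT 5
  refine ⟨M, fun s hs k => ?_⟩
  have hz : 0 < 1 + znorm k := by linarith [znorm_nonneg k]
  rw [decayWeight, ← div_eq_mul_inv, le_div_iff₀ (by positivity)]
  calc (1 + znorm k) * |Θ.θ s k| * (1 + znorm k) ^ 4 = (1 + znorm k) ^ 5 * |Θ.θ s k| := by ring
    _ ≤ M := hM s hs k

lemma hasDerivWithinAt_hamiltonianDensity (k : ℤ × ℤ) {s : ℝ} (hs : 0 ≤ s) :
    HasDerivWithinAt (fun s => hamiltonianDensity (Θ.θ s) k)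
      (hamiltonianGrad (Θ.θ s) k * sqgNonlinearity (Θ.θ s) k) (Ici 0) s := by
  unfold hamiltonianDensity hamiltonianGrad
  split_ifs with hk
  · refine (((Θ.ode k s hs).fun_pow 2).mul_const _).congr_deriv ?_
    rw [sqgNonlinearity]
    push_cast
    ring
  · simpa using hasDerivWithinAt_const s (Ici 0) (0 : ℝ)

theorem hamiltonian_eq_of_isEven (hE : Θ.IsEven) {t : ℝ} (ht : 0 ≤ t) :
    hamiltonian (Θ.θ t) = hamiltonian (Θ.θ 0) := by
  rcases ht.eq_or_lt with rfl | ht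
  · rfl
  obtain ⟨M, hM⟩ := Θ.exists_decayBound ht
  have hcont : ContinuousOn (fun s => hamiltonian (Θ.θ s)) (Icc 0 t) :=
    continuousOn_tsum (fun k s hs => (Θ.hasDerivWithinAt_hamiltonianDensity k hs.1)
      |>.continuousWithinAt.mono Icc_subset_Ici_self)
      (summable_decayWeight.mul_left _) fun k s hs => (hM s hs).abs_hamiltonianDensity_le k
  have hderiv : ∀ s ∈ Ioo 0 t, HasDerivAt (fun s => hamiltonian (Θ.θ s)) 0 s := by
    intro s hs
    have hM' := fun r (hr : r ∈ Ioo 0 t) => hM r (Ioo_subset_Icc_self hr)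
    have := hasDerivAt_tsum_of_isPreconnected (summable_decayWeight.mul_left _) isOpen_Ioo
      isPreconnected_Ioo
      (fun k r hr => (Θ.hasDerivWithinAt_hamiltonianDensity k hr.1.le).hasDerivAt
        (Ici_mem_nhds hr.1))
      (fun k r hr => (hM' r hr).abs_hamiltonianGrad_mul_sqgNonlinearity_le k) hs
      (hM' s hs).summable_hamiltonianDensity hs
    rwa [tsum_hamiltonianGrad_mul_sqgNonlinearity_eq_zero (hE s hs.1.le)
      (hM' s hs).summable_hamiltonianGrad_mul_sqgSummand] at this
  obtain ⟨c, -, hc⟩ := exists_hasDerivAt_eq_slope _ (fun _ => 0) ht hcont hderiv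
  rw [eq_comm, div_eq_zero_iff, sub_eq_zero] at hc
  exact hc.resolve_right (by linarith)

end SQGSol

lemma hamiltonian_pdat (τ : ℝ) : hamiltonian (pdat τ) = (3 - 2 / √5) * τ ^ 2 := by
  have hsupp : ∀ k ∉ ({(1, 0), (-1, 0), (0, 2), (0, -2), (1, 2), (-1, -2)} : Finset (ℤ × ℤ)),
      hamiltonianDensity (pdat τ) k = 0 := by
    intro k hk
    simp only [Finset.mem_insert, Finset.mem_singleton, not_or] at hk
    simp [hamiltonianDensity, pdat, hk]
  rw [hamiltonian, tsum_eq_sum hsupp]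
  have h4 : √4 = 2 := by
    rw [show (4 : ℝ) = 2 ^ 2 by norm_num, Real.sqrt_sq zero_le_two]
  norm_num [hamiltonianDensity, pdat, znorm, h4]
  field_simp
  ring

lemma tsum_sq_le_two_mul_hamiltonian {a : ℤ × ℤ → ℝ} (h0 : a 0 = 0)
    (hodd : ∀ k : ℤ × ℤ, Odd k.2 → a k = 0) (hsum : Summable (hamiltonianDensity a)) :
    (∑' k : ℤ × ℤ, if k ≠ (1, 0) ∧ k ≠ (-1, 0) then a k ^ 2 else 0) ≤ 2 * hamiltonian a := by
  have hle : ∀ k : ℤ × ℤ,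
      (if k ≠ (1, 0) ∧ k ≠ (-1, 0) then a k ^ 2 else 0) ≤ 2 * hamiltonianDensity a k := by
    intro k
    have hH := hamiltonianDensity_nonneg a k
    split_ifs with he
    · rcases eq_or_ne k 0 with rfl | hk
      · simpa [h0] using hH
      rcases Int.even_or_odd k.2 with heven | ho
      · have h2 := two_le_znorm hk he.1 he.2 heven
        have : 1 / znorm k ≤ 1 / 2 := one_div_le_one_div_of_le two_pos h2
        rw [hamiltonianDensity, if_pos hk]
        nlinarith [sq_nonneg (a k)]
      · simpa [hodd k ho] using hH
    · linarith
  rw [hamiltonian, ← tsum_mul_left]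
  exact (hsum.mul_left 2).of_nonneg_of_le (fun k => by split_ifs <;> positivity) hle
    |>.tsum_le_tsum hle (hsum.mul_left 2)

theorem sqg_perturbation_control_general (τ : ℝ) (Θ : SQGSol) (hE : Θ.IsEven)
    (hinit : ∀ k : ℤ × ℤ, Θ.θ 0 k = pdat τ k)
    (hodd : ∀ t : ℝ, 0 ≤ t → ∀ k : ℤ × ℤ, Odd k.2 → Θ.θ t k = 0) :
    ∀ t : ℝ, 0 ≤ t →
      (∑' k : ℤ × ℤ, if k ≠ 0 then Θ.θ t k ^ 2 * (1 - 1 / znorm k) else 0) =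
          (3 - 2 / Real.sqrt 5) * τ ^ 2 ∧
      (∑' k : ℤ × ℤ, if k ≠ (1, 0) ∧ k ≠ (-1, 0) then Θ.θ t k ^ 2 else 0) ≤
          10 * τ ^ 2 := by
  intro t ht
  have hH : hamiltonian (Θ.θ t) = (3 - 2 / √5) * τ ^ 2 := by
    rw [Θ.hamiltonian_eq_of_isEven hE ht, show Θ.θ 0 = pdat τ from funext hinit,
      hamiltonian_pdat]
  obtain ⟨M, hM⟩ := Θ.exists_decayBound (T := t + 1) (by linarith)
  have hsum := (hM t ⟨ht, by linarith⟩).summable_hamiltonianDensity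
  refine ⟨hH, (tsum_sq_le_two_mul_hamiltonian (Θ.zero_mode t ht) (hodd t ht) hsum).trans ?_⟩
  have : 0 ≤ 2 / √5 := by positivity
  nlinarith [sq_nonneg τ]

/-- For the solution with initial datum `p_τ` (vanishing on odd `k₂`), for all `t ≥ 0`:
(i) `Σ_{k≠0} θ̂_k(t)² (1 − 1/|k|) = (3 − 2/√5) τ²`, and
(ii) `Σ_{k ∉ {e,−e}} θ̂_k(t)² ≤ 10 τ²`. -/
theorem sqg_perturbation_control (τ : ℝ) (hτ : 0 < τ) (Θ : SQGSol) (hE : Θ.IsEven)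
    (hinit : ∀ k : ℤ × ℤ, Θ.θ 0 k = pdat τ k)
    (hodd : ∀ t : ℝ, 0 ≤ t → ∀ k : ℤ × ℤ, Odd k.2 → Θ.θ t k = 0) :
    ∀ t : ℝ, 0 ≤ t →
      (∑' k : ℤ × ℤ, if k ≠ 0 then Θ.θ t k ^ 2 * (1 - 1 / znorm k) else 0) =
          (3 - 2 / Real.sqrt 5) * τ ^ 2 ∧
      (∑' k : ℤ × ℤ, if k ≠ (1, 0) ∧ k ≠ (-1, 0) then Θ.θ t k ^ 2 else 0) ≤
          10 * τ ^ 2 :=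
  sqg_perturbation_control_general τ Θ hE hinit hodd
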